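/- (Curved-spacetime dimension estimator identity.) Let n ≥ 2 be an integer, T > 0, and R, R₀₀ arbitrary real numbers. With α_k = -nk/(12(kn+2)((k+1)n+2)) and β_k = nk/(12((k+1)n+2)), define for k = 1,2,3,4: S_k = T^{4n}·( 1 + (4/k)·α_k·R·T² + (4/k)·β_k·R₀₀·T² ) and U_k = (kn+2)·((k+1)n+2)·S_k. Then U₁ - 3U₂ + 3U₃ - U₄ = 0; equivalently, (n+2)(2n+2)S₁ - 3(2n+2)(3n+2)S₂ + 3(3n+2)(4n+2)S₃ - (4n+2)(5n+2)S₄ = 0. -/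
import Mathlib


/-- `α_k = -nk/(12(kn+2)((k+1)n+2))`. -/
noncomputable def alphaCoeff (n k : ℕ) : ℝ :=
  -((n : ℝ) * k) / (12 * ((k : ℝ) * n + 2) * (((k : ℝ) + 1) * n + 2))

/-- `β_k = nk/(12((k+1)n+2))`. -/
noncomputable def betaCoeff (n k : ℕ) : ℝ :=
  (n : ℝ) * k / (12 * (((k : ℝ) + 1) * n + 2))

/-- The ρ-independent combination `S_k = T^{4n}(1 + (4/k)α_k R T² + (4/k)β_k R₀₀ T²)`
of k-chain abundances, truncated at its leading curvature correction. -/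
noncomputable def Schain (n : ℕ) (T R R₀₀ : ℝ) (k : ℕ) : ℝ :=
  T ^ (4 * n) *
    (1 + (4 / (k : ℝ)) * alphaCoeff n k * R * T ^ 2 +
      (4 / (k : ℝ)) * betaCoeff n k * R₀₀ * T ^ 2)

/-- `U_k = (kn+2)((k+1)n+2)·S_k`. -/
noncomputable def Uchain (n : ℕ) (T R R₀₀ : ℝ) (k : ℕ) : ℝ :=
  ((k : ℝ) * n + 2) * (((k : ℝ) + 1) * n + 2) * Schain n T R R₀₀ k

/-- Curved-spacetime dimension estimator identity: `U₁ - 3U₂ + 3U₃ - U₄ = 0`;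
equivalently `(n+2)(2n+2)S₁ - 3(2n+2)(3n+2)S₂ + 3(3n+2)(4n+2)S₃ - (4n+2)(5n+2)S₄ = 0`. -/
theorem stmt17 (n : ℕ) (hn : 2 ≤ n) (T R R₀₀ : ℝ) (hT : 0 < T) :
    Uchain n T R R₀₀ 1 - 3 * Uchain n T R R₀₀ 2 + 3 * Uchain n T R R₀₀ 3 -
        Uchain n T R R₀₀ 4 = 0 ∧
    ((n : ℝ) + 2) * (2 * (n : ℝ) + 2) * Schain n T R R₀₀ 1 -
        3 * (2 * (n : ℝ) + 2) * (3 * (n : ℝ) + 2) * Schain n T R R₀₀ 2 +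
        3 * (3 * (n : ℝ) + 2) * (4 * (n : ℝ) + 2) * Schain n T R R₀₀ 3 -
        (4 * (n : ℝ) + 2) * (5 * (n : ℝ) + 2) * Schain n T R R₀₀ 4 = 0 := by
  have h1 : ((1:ℝ) * n + 2) ≠ 0 := by positivity
  have h2 : ((2:ℝ) * n + 2) ≠ 0 := by positivity
  have h3 : ((3:ℝ) * n + 2) ≠ 0 := by positivity
  have h4 : ((4:ℝ) * n + 2) ≠ 0 := by positivity
  have h5 : ((5:ℝ) * n + 2) ≠ 0 := by positivity
  simp only [Uchain, Schain, alphaCoeff, betaCoeff]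
  push_cast
  constructor <;> field_simp <;> ring
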